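/- arXiv:2307.15034 — 5 statements merged into one kernel-verified Lean document; each statement's English description precedes it below -/
import Mathlib

section
/- Let d, m be positive integers and set n = m^d. Let ω ∈ ℝ^d, and let v : [0,1]^d → ℝ be L-Lipschitz with respect to the Euclidean norm and satisfy |v(x)| ≤ M for all x ∈ [0,1]^d. Then for the complex Fourier basis function φ_ω(x) = e^{2πi⟨ω,x⟩}, the discretization error satisfies |∫_{[0,1]^d} v(x)·e^{2πi⟨ω,x⟩} dx − m^{-d} · Σ_{i ∈ {0,...,m−1}^d} v(i/m)·e^{2πi⟨ω, i/m⟩}| ≤ 2√d · (2π·M·‖ω‖ + L) · n^{−1/d}, where n^{−1/d} = 1/m. -/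
/-!
On each cell of the grid the integrand `v(x) e^{2πi⟨ω,x⟩}` moves by at most
`(2πM‖ω‖ + L)` times the distance to the cell's corner, which is at most `√d / m`.
Splitting the integral over the `m^d` cells of volume `m^{-d}` and comparing each piece with
its corner value therefore gives the error bound `(2πM‖ω‖ + L) √d / m`, half the stated one.
-/

open MeasureTheory Real Set Complex Function

theorem norm_setIntegral_iUnion_sub_sum_le {α ι E : Type*} [MeasurableSpace α] [Fintype ι]
    [NormedAddCommGroup E] [NormedSpace ℝ E] [CompleteSpace E] {μ : Measure α} {s : ι → Set α}
    {f : α → E} {c : ι → α} {ε : ℝ} (hs : ∀ i, MeasurableSet (s i)) (hdisj : Pairwise (Disjoint on s))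
    (hμ : ∀ i, μ (s i) ≠ ⊤) (hf : ∀ i, IntegrableOn f (s i) μ)
    (hε : ∀ i, ∀ x ∈ s i, ‖f x - f (c i)‖ ≤ ε) :
    ‖(∫ x in ⋃ i, s i, f x ∂μ) - ∑ i, μ.real (s i) • f (c i)‖ ≤ ε * μ.real (⋃ i, s i) := by
  rw [integral_iUnion_fintype hs hdisj hf, measureReal_iUnion_fintype hdisj hs hμ, Finset.mul_sum,
    ← Finset.sum_sub_distrib]
  refine (norm_sum_le _ _).trans (Finset.sum_le_sum fun i _ => ?_)
  rw [← setIntegral_const, ← integral_sub (hf i) (integrableOn_const (hμ i))]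
  exact norm_setIntegral_le_of_norm_le_const (hμ i).lt_top (hε i)

theorem norm_exp_I_mul_ofReal_sub_exp_I_mul_ofReal_le (s t : ℝ) :
    ‖exp (I * s) - exp (I * t)‖ ≤ |s - t| := by
  have hfactor : exp (I * s) - exp (I * t) = exp (I * t) * (exp (I * ↑(s - t)) - 1) := by
    rw [mul_sub, ← Complex.exp_add]
    push_cast
    ring_nf
  rw [hfactor, norm_mul, norm_exp_I_mul_ofReal, one_mul, ← Real.norm_eq_abs]
  exact Real.norm_exp_I_mul_ofReal_sub_one_le

theorem norm_ofReal_mul_exp_I_mul_sub_le (a b s t : ℝ) :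
    ‖(a : ℂ) * exp (I * s) - b * exp (I * t)‖ ≤ |a| * |s - t| + |a - b| := by
  have hsplit : (a : ℂ) * exp (I * s) - b * exp (I * t)
      = a * (exp (I * s) - exp (I * t)) + ((a - b : ℝ) : ℂ) * exp (I * t) := by
    push_cast
    ring
  rw [hsplit]
  refine (norm_add_le _ _).trans (add_le_add ?_ ?_)
  · rw [norm_mul, norm_real, Real.norm_eq_abs]
    exact mul_le_mul_of_nonneg_left (norm_exp_I_mul_ofReal_sub_exp_I_mul_ofReal_le s t)
      (abs_nonneg a)
  · rw [norm_mul, norm_exp_I_mul_ofReal, mul_one, norm_real, Real.norm_eq_abs]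

section Euclidean

variable {ι : Type*} [Fintype ι]

theorem abs_sum_mul_sub_sum_mul_le (ω x y : ι → ℝ) :
    |∑ k, ω k * x k - ∑ k, ω k * y k| ≤ √(∑ k, ω k ^ 2) * √(∑ k, (x k - y k) ^ 2) := by
  rw [← Finset.sum_sub_distrib, ← Real.sqrt_mul (Finset.sum_nonneg fun k _ => sq_nonneg (ω k))]
  simp_rw [← mul_sub]
  exact Real.abs_le_sqrt (Finset.sum_mul_sq_le_sq_mul_sq _ _ _)

theorem sqrt_sum_sub_sq_eq_dist_toLp (x y : ι → ℝ) :
    √(∑ k, (x k - y k) ^ 2) = dist (WithLp.toLp 2 x) (WithLp.toLp 2 y) := by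
  simp [EuclideanSpace.dist_eq, Real.dist_eq, sq_abs]

theorem continuousOn_of_abs_sub_le_mul_sqrt {s : Set (ι → ℝ)} {v : (ι → ℝ) → ℝ} {L : ℝ}
    (hv : ∀ x ∈ s, ∀ y ∈ s, |v x - v y| ≤ L * √(∑ k, (x k - y k) ^ 2)) : ContinuousOn v s := by
  have hlip : LipschitzOnWith L.toNNReal (v ∘ WithLp.ofLp) (WithLp.toLp 2 '' s) := by
    refine LipschitzOnWith.of_dist_le' ?_
    rintro _ ⟨x, hx, rfl⟩ _ ⟨y, hy, rfl⟩
    simpa [Real.dist_eq, sqrt_sum_sub_sq_eq_dist_toLp] using hv x hx y hy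
  exact hlip.continuousOn.comp (PiLp.continuous_toLp 2 _).continuousOn (mapsTo_image _ _)

end Euclidean

section Grid

variable {ι : Type*} {m : ℕ}

def gridCell (m : ℕ) (i : ι → Fin m) : Set (ι → ℝ) :=
  univ.pi fun k => Ico ((i k : ℝ) / m) (((i k : ℝ) + 1) / m)

theorem mem_Ico_div_iff_floor_eq {m x : ℝ} (hm : 0 < m) (j : ℕ) :
    x ∈ Ico (j / m) ((j + 1) / m) ↔ ⌊x * m⌋ = j := by
  rw [Int.floor_eq_iff, Int.cast_natCast, mem_Ico, div_le_iff₀ hm, lt_div_iff₀ hm]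

theorem measurableSet_gridCell [Countable ι] (i : ι → Fin m) : MeasurableSet (gridCell m i) :=
  MeasurableSet.univ_pi fun _ => measurableSet_Ico

theorem pairwise_disjoint_gridCell (hm : 0 < m) : Pairwise (Disjoint on gridCell (ι := ι) m) := by
  intro i j hij
  refine Set.disjoint_left.2 fun x hi hj => hij (funext fun k => Fin.ext ?_ : i = j)
  have hm' : (0 : ℝ) < m := by exact_mod_cast hm
  have hik := (mem_Ico_div_iff_floor_eq hm' (i k)).1 (hi k (mem_univ k))
  have hjk := (mem_Ico_div_iff_floor_eq hm' (j k)).1 (hj k (mem_univ k))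
  exact_mod_cast hik.symm.trans hjk

theorem iUnion_Ico_div (hm : 0 < m) :
    ⋃ j : Fin m, Ico ((j : ℝ) / m) (((j : ℝ) + 1) / m) = Ico 0 1 := by
  have hm' : (0 : ℝ) < m := by exact_mod_cast hm
  ext x
  have hIco : x ∈ Ico (0 : ℝ) 1 ↔ 0 ≤ ⌊x * m⌋ ∧ ⌊x * m⌋ < m := by
    rw [Int.floor_nonneg, Int.floor_lt, mem_Ico, Int.cast_natCast, mul_nonneg_iff_of_pos_right hm',
      mul_lt_iff_lt_one_left hm']
  rw [hIco, mem_iUnion]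
  simp_rw [mem_Ico_div_iff_floor_eq hm']
  constructor
  · rintro ⟨j, hj⟩
    omega
  · rintro ⟨h0, hlt⟩
    exact ⟨⟨⌊x * m⌋.toNat, by omega⟩, by simp [h0]⟩

theorem iUnion_gridCell (hm : 0 < m) :
    ⋃ i, gridCell (ι := ι) m i = univ.pi fun _ => Ico 0 1 := by
  simp only [gridCell, iUnion_Ico_div hm,
    iUnion_univ_pi fun (_ : ι) (j : Fin m) => Ico ((j : ℝ) / m) (((j : ℝ) + 1) / m)]

theorem gridCell_subset_Icc (hm : 0 < m) (i : ι → Fin m) :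
    gridCell m i ⊆ univ.pi fun _ => Icc 0 1 :=
  (subset_iUnion _ i).trans
    ((iUnion_gridCell hm).trans_subset (pi_mono fun _ _ => Ico_subset_Icc_self))

theorem corner_mem_gridCell (hm : 0 < m) (i : ι → Fin m) :
    (fun k => (i k : ℝ) / m) ∈ gridCell m i := fun _ _ =>
  ⟨le_rfl, div_lt_div_of_pos_right (lt_add_one _) (Nat.cast_pos.2 hm)⟩

theorem volume_gridCell [Fintype ι] (hm : 0 < m) (i : ι → Fin m) :
    volume (gridCell m i) = ENNReal.ofReal ((m : ℝ) ^ Fintype.card ι)⁻¹ := by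
  have hm' : (0 : ℝ) < m := by exact_mod_cast hm
  have hside : ∀ k, (((i k : ℝ) + 1) / m - (i k : ℝ) / m) = (m : ℝ)⁻¹ := fun k => by
    field_simp
    ring
  rw [gridCell, Real.volume_pi_Ico, Finset.prod_congr rfl fun k _ => congrArg _ (hside k),
    Finset.prod_const, ← ENNReal.ofReal_pow (by positivity), inv_pow, Finset.card_univ]

theorem measureReal_gridCell [Fintype ι] (hm : 0 < m) (i : ι → Fin m) :
    volume.real (gridCell m i) = ((m : ℝ) ^ Fintype.card ι)⁻¹ := by
  rw [measureReal_def, volume_gridCell hm, ENNReal.toReal_ofReal (by positivity)]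

theorem sqrt_sum_sub_corner_sq_le [Fintype ι] {i : ι → Fin m} {x : ι → ℝ}
    (hx : x ∈ gridCell m i) :
    √(∑ k, (x k - (i k : ℝ) / m) ^ 2) ≤ √(Fintype.card ι) / m := by
  have hsum : ∑ k, (x k - (i k : ℝ) / m) ^ 2 ≤ ∑ _k : ι, (1 / m : ℝ) ^ 2 :=
    Finset.sum_le_sum fun k _ => by
      obtain ⟨hlo, hhi⟩ := hx k (mem_univ k)
      rw [add_div] at hhi
      exact pow_le_pow_left₀ (by linarith) (by linarith) 2
  calc √(∑ k, (x k - (i k : ℝ) / m) ^ 2) ≤ √(Fintype.card ι * (1 / m : ℝ) ^ 2) := by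
        simpa using Real.sqrt_le_sqrt hsum
    _ = √(Fintype.card ι) / m := by
        rw [Real.sqrt_mul (Nat.cast_nonneg _), Real.sqrt_sq (by positivity), mul_one_div]

theorem norm_setIntegral_Icc_sub_cornerSum_le {E : Type*} [NormedAddCommGroup E] [NormedSpace ℝ E]
    [CompleteSpace E] [Fintype ι] [DecidableEq ι] (hm : 0 < m) {f : (ι → ℝ) → E}
    (hf : IntegrableOn f (univ.pi fun _ => Icc 0 1)) {ε : ℝ}
    (hε : ∀ i, ∀ x ∈ gridCell m i, ‖f x - f (fun k => (i k : ℝ) / m)‖ ≤ ε) :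
    ‖(∫ x in univ.pi fun _ => Icc (0 : ℝ) 1, f x)
      - ((m : ℝ) ^ Fintype.card ι)⁻¹ • ∑ i : ι → Fin m, f (fun k => (i k : ℝ) / m)‖ ≤ ε := by
  have hriemann := norm_setIntegral_iUnion_sub_sum_le measurableSet_gridCell
    (pairwise_disjoint_gridCell hm) (fun i => (volume_gridCell hm i).trans_ne ENNReal.ofReal_ne_top)
    (fun i => hf.mono_set (gridCell_subset_Icc hm i)) hε
  have hae : (univ.pi fun _ : ι => Ico (0 : ℝ) 1) =ᵐ[volume] univ.pi fun _ => Icc 0 1 :=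
    Measure.pi_Ico_ae_eq_pi_Icc
  have hunit : volume.real (univ.pi fun _ : ι => Ico (0 : ℝ) 1) = 1 := by
    simp [measureReal_def, Real.volume_pi_Ico]
  simp_rw [measureReal_gridCell hm] at hriemann
  rwa [iUnion_gridCell hm, setIntegral_congr_set hae, hunit, mul_one,
    ← Finset.smul_sum] at hriemann

end Grid

theorem natCast_pow_rpow_neg_one_div {d : ℕ} (m : ℕ) (hd : d ≠ 0) :
    ((m ^ d : ℕ) : ℝ) ^ (-(1 : ℝ) / d) = (m : ℝ)⁻¹ := by
  rw [Nat.cast_pow, neg_div, rpow_neg (by positivity), one_div,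
    pow_rpow_inv_natCast (Nat.cast_nonneg m) hd]

theorem norm_ofReal_mul_cexp_two_pi_I_sum_sub_le {ι : Type*} [Fintype ι] {v : (ι → ℝ) → ℝ}
    {L M : ℝ} (ω x y : ι → ℝ) (hvx : |v x| ≤ M)
    (hvxy : |v x - v y| ≤ L * √(∑ k, (x k - y k) ^ 2)) :
    ‖(v x : ℂ) * exp (2 * π * I * ((∑ k, ω k * x k : ℝ) : ℂ))
      - (v y : ℂ) * exp (2 * π * I * ((∑ k, ω k * y k : ℝ) : ℂ))‖
    ≤ (2 * π * M * √(∑ k, ω k ^ 2) + L) * √(∑ k, (x k - y k) ^ 2) := by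
  have hphase : ∀ z : ι → ℝ, 2 * π * I * ((∑ k, ω k * z k : ℝ) : ℂ)
      = I * ((2 * π * ∑ k, ω k * z k : ℝ) : ℂ) := fun z => by
    push_cast
    ring
  have hdiff : |2 * π * ∑ k, ω k * x k - 2 * π * ∑ k, ω k * y k|
      ≤ 2 * π * (√(∑ k, ω k ^ 2) * √(∑ k, (x k - y k) ^ 2)) := by
    rw [← mul_sub, abs_mul, abs_of_pos two_pi_pos]
    exact mul_le_mul_of_nonneg_left (abs_sum_mul_sub_sum_mul_le ω x y) two_pi_pos.le
  rw [hphase, hphase]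
  refine (norm_ofReal_mul_exp_I_mul_sub_le _ _ _ _).trans ?_
  calc |v x| * |2 * π * ∑ k, ω k * x k - 2 * π * ∑ k, ω k * y k| + |v x - v y|
      ≤ M * (2 * π * (√(∑ k, ω k ^ 2) * √(∑ k, (x k - y k) ^ 2)))
          + L * √(∑ k, (x k - y k) ^ 2) :=
        add_le_add (mul_le_mul hvx hdiff (abs_nonneg _) ((abs_nonneg _).trans hvx)) hvxy
    _ = (2 * π * M * √(∑ k, ω k ^ 2) + L) * √(∑ k, (x k - y k) ^ 2) := by ring

/-- Corner-grid discretization error bound for the complex Fourier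
integrand `v(x) * e^{2πi⟨ω,x⟩}` on the unit cube `[0,1]^d`. -/
theorem cornerGrid_discretization_error_complex
    (d m : ℕ) (hd : 0 < d) (hm : 0 < m) (n : ℕ) (hn : n = m ^ d)
    (ω : Fin d → ℝ) (L M : ℝ) (v : (Fin d → ℝ) → ℝ)
    (hLip : ∀ x ∈ Set.univ.pi fun _ : Fin d => Set.Icc (0:ℝ) 1,
      ∀ y ∈ Set.univ.pi fun _ : Fin d => Set.Icc (0:ℝ) 1,
        |v x - v y| ≤ L * Real.sqrt (∑ k, (x k - y k) ^ 2))
    (hBound : ∀ x ∈ Set.univ.pi fun _ : Fin d => Set.Icc (0:ℝ) 1, |v x| ≤ M) :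
    ‖((∫ x in Set.univ.pi fun _ : Fin d => Set.Icc (0:ℝ) 1,
          (v x : ℂ) * Complex.exp (2 * Real.pi * Complex.I * ((∑ k, ω k * x k : ℝ) : ℂ))) -
        ((m : ℝ) ^ d)⁻¹ * ∑ i : Fin d → Fin m,
          (v (fun k => (i k : ℝ) / m) : ℂ) *
            Complex.exp (2 * Real.pi * Complex.I * ((∑ k, ω k * ((i k : ℝ) / m) : ℝ) : ℂ)))‖ ≤
    2 * Real.sqrt d * (2 * π * M * Real.sqrt (∑ k, (ω k) ^ 2) + L) *
      (n : ℝ) ^ (-(1 : ℝ) / d) := by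
  set S := univ.pi fun _ : Fin d => Icc (0 : ℝ) 1
  set f : (Fin d → ℝ) → ℂ := fun x => (v x : ℂ) * exp (2 * π * I * ((∑ k, ω k * x k : ℝ) : ℂ))
  set K := 2 * π * M * √(∑ k, ω k ^ 2) + L
  have hK : 0 ≤ K := by
    have h01 := hLip 0 (fun _ _ => ⟨le_rfl, zero_le_one⟩) 1 (fun _ _ => ⟨zero_le_one, le_rfl⟩)
    have hL : 0 ≤ L := nonneg_of_mul_nonneg_left ((abs_nonneg _).trans h01) (by simpa using hd)
    have hM : 0 ≤ M := (abs_nonneg _).trans (hBound 0 fun _ _ => ⟨le_rfl, zero_le_one⟩)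
    positivity
  have hf : IntegrableOn f S :=
    ((continuous_ofReal.comp_continuousOn (continuousOn_of_abs_sub_le_mul_sqrt hLip)).mul
      (by fun_prop)).integrableOn_compact (isCompact_univ_pi fun _ => isCompact_Icc)
  have hε : ∀ i : Fin d → Fin m, ∀ x ∈ gridCell m i,
      ‖f x - f (fun k => (i k : ℝ) / m)‖ ≤ K * (√d / m) := fun i x hx => by
    have hcell := gridCell_subset_Icc hm i
    have hdist := sqrt_sum_sub_corner_sq_le hx
    rw [Fintype.card_fin] at hdist
    exact (norm_ofReal_mul_cexp_two_pi_I_sum_sub_le ω x _ (hBound x (hcell hx))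
      (hLip x (hcell hx) _ (hcell (corner_mem_gridCell hm i)))).trans
      (mul_le_mul_of_nonneg_left hdist hK)
  have hquad := norm_setIntegral_Icc_sub_cornerSum_le hm hf hε
  rw [Fintype.card_fin, Complex.real_smul] at hquad
  calc _ ≤ K * (√d / m) := hquad
    _ ≤ 2 * √d * K * (n : ℝ) ^ (-(1 : ℝ) / d) := by
      rw [hn, natCast_pow_rpow_neg_one_div m hd.ne']
      have : 0 ≤ √d * K * (m : ℝ)⁻¹ := by positivity
      linarith [show K * (√d / m) = √d * K * (m : ℝ)⁻¹ by ring]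
end

section
/- For every real x with 0 < x < π, the cotangent satisfies cot(x) < 1/x − x/3 (equivalently, x·cot(x) < 1 − x²/3). -/
open Real Set

/- Clearing denominators, the claim is `x cos x < (1 - x²/3) sin x`. Both
`sin x - x cos x` and `(1 - x²/3) sin x - x cos x` vanish at `0`, and their derivatives
`x sin x` and `(x/3)(sin x - x cos x)` are positive on `(0, π)`: the first is positive
because `sin` is, and then the second because the first function is. -/

theorem pos_of_eq_zero_of_hasDerivAt_pos {f f' : ℝ → ℝ} {x : ℝ} (hx : 0 < x)
    (hf : ∀ y ∈ Icc 0 x, HasDerivAt f (f' y) y) (hf₀ : f 0 = 0)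
    (hf' : ∀ y ∈ Ioo 0 x, 0 < f' y) : 0 < f x := by
  have hmono : StrictMonoOn f (Icc 0 x) := by
    refine strictMonoOn_of_hasDerivWithinAt_pos (f' := f') (convex_Icc 0 x)
      (fun y hy ↦ (hf y hy).continuousAt.continuousWithinAt) (fun y hy ↦ ?_) ?_
    · rw [interior_Icc] at hy ⊢
      exact (hf y (Ioo_subset_Icc_self hy)).hasDerivWithinAt
    · simpa only [interior_Icc] using hf'
  simpa only [hf₀] using hmono (left_mem_Icc.2 hx.le) (right_mem_Icc.2 hx.le) hx

theorem Real.sin_sub_mul_cos_pos {x : ℝ} (hx : 0 < x) (hxπ : x < π) :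
    0 < sin x - x * cos x := by
  refine pos_of_eq_zero_of_hasDerivAt_pos (f := fun y ↦ sin y - y * cos y)
    (f' := fun y ↦ y * sin y) hx (fun y _ ↦ ?_) (by simp)
    fun y hy ↦ mul_pos hy.1 (sin_pos_of_pos_of_lt_pi hy.1 (hy.2.trans hxπ))
  exact ((hasDerivAt_sin y).sub ((hasDerivAt_id' y).mul (hasDerivAt_cos y))).congr_deriv
    (by ring)

theorem Real.mul_cos_lt_one_sub_sq_div_three_mul_sin {x : ℝ} (hx : 0 < x) (hxπ : x < π) :
    x * cos x < (1 - x ^ 2 / 3) * sin x := by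
  rw [← sub_pos]
  refine pos_of_eq_zero_of_hasDerivAt_pos (f := fun y ↦ (1 - y ^ 2 / 3) * sin y - y * cos y)
    (f' := fun y ↦ y / 3 * (sin y - y * cos y)) hx (fun y _ ↦ ?_) (by simp)
    fun y hy ↦ mul_pos (div_pos hy.1 three_pos) (sin_sub_mul_cos_pos hy.1 (hy.2.trans hxπ))
  exact (((((hasDerivAt_pow 2 y).div_const 3).const_sub 1).mul (hasDerivAt_sin y)).sub
    ((hasDerivAt_id' y).mul (hasDerivAt_cos y))).congr_deriv (by ring)

/-- For `0 < x < π`, `cot x < 1/x − x/3`. -/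
theorem cot_lt_one_div_sub_third (x : ℝ) (hx : 0 < x) (hxπ : x < π) :
    Real.cot x < 1 / x - x / 3 := by
  have hsin : 0 < sin x := sin_pos_of_pos_of_lt_pi hx hxπ
  rw [cot_eq_cos_div_sin, div_lt_iff₀ hsin, ← mul_lt_mul_iff_right₀ hx]
  calc x * cos x < (1 - x ^ 2 / 3) * sin x := mul_cos_lt_one_sub_sq_div_three_mul_sin hx hxπ
    _ = x * ((1 / x - x / 3) * sin x) := by field_simp
end

section
/- Let d be a positive integer and m ≥ 2 an integer. Then the corner-grid quadrature sum of the function v(x) = ∏_{k=1}^{d} x_k·sin(2π x_k) satisfies m^{-d} · Σ_{i ∈ {0,...,m−1}^d} ∏_{k=1}^{d} ( (i_k/m)·sin(2π i_k/m) ) = ( −cot(π/m)/(2m) )^d. -/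
/-!
The sum factorises as the `d`-th power of the one-dimensional sum `∑ⱼ (j/m) sin(2πj/m)`.
With `ζ = exp(2πi/m)` this is the imaginary part of `(1/m) ∑ⱼ j ζʲ`, and the differentiated
geometric series `(ζ - 1) ∑_{j<m} j ζʲ = m ζᵐ - ζ ∑_{j<m} ζʲ = m` reduces it to
`Im (ζ - 1)⁻¹ = -cot(π/m)/2`.
-/

open Real Finset

theorem Complex.im_inv_exp_mul_I_sub_one (θ : ℝ) :
    (Complex.exp (θ * Complex.I) - 1)⁻¹.im = -Real.cot (θ / 2) / 2 := by
  have hθ : θ = 2 * (θ / 2) := by ring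
  rw [Complex.inv_im, Complex.normSq_apply, Complex.sub_re, Complex.sub_im,
    Complex.exp_ofReal_mul_I_re, Complex.exp_ofReal_mul_I_im, Complex.one_re, Complex.one_im,
    Real.cot_eq_cos_div_sin, hθ, Real.cos_two_mul, Real.sin_two_mul, ← hθ]
  have hden : (2 * Real.cos (θ / 2) ^ 2 - 1 - 1) * (2 * Real.cos (θ / 2) ^ 2 - 1 - 1) +
      (2 * Real.sin (θ / 2) * Real.cos (θ / 2) - 0) * (2 * Real.sin (θ / 2) * Real.cos (θ / 2) - 0)
      = 4 * Real.sin (θ / 2) ^ 2 := by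
    linear_combination 4 * (Real.cos (θ / 2) ^ 2 - 1) * Real.sin_sq_add_cos_sq (θ / 2)
  rw [hden]
  rcases eq_or_ne (Real.sin (θ / 2)) 0 with hs | hs
  · -- both sides are junk values `x / 0 = 0`
    simp [hs]
  · field_simp
    ring

theorem sub_one_mul_sum_range_mul_pow {R : Type*} [CommRing R] (x : R) (n : ℕ) :
    (x - 1) * ∑ i ∈ range n, (i : R) * x ^ i = n * x ^ n - x * ∑ i ∈ range n, x ^ i := by
  induction n with
  | zero => simp
  | succ n ih =>
    rw [sum_range_succ, sum_range_succ, mul_add, ih]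
    push_cast
    ring

theorem IsPrimitiveRoot.sum_range_mul_pow {K : Type*} [Field K] {ζ : K} {n : ℕ}
    (hζ : IsPrimitiveRoot ζ n) (hn : 1 < n) :
    ∑ i ∈ range n, (i : K) * ζ ^ i = n / (ζ - 1) := by
  have hζ1 : ζ - 1 ≠ 0 := sub_ne_zero.mpr (hζ.ne_one hn)
  rw [eq_div_iff hζ1, mul_comm, sub_one_mul_sum_range_mul_pow, hζ.pow_eq_one,
    hζ.geom_sum_eq_zero hn]
  ring

theorem cornerGrid_sum_x_sin (m : ℕ) (hm : 2 ≤ m) :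
    ∑ j : Fin m, (j : ℝ) / m * Real.sin (2 * π * j / m) = -Real.cot (π / m) / 2 := by
  set ζ := Complex.exp ((2 * π / m : ℝ) * Complex.I)
  have hζ : IsPrimitiveRoot ζ m := by
    convert Complex.isPrimitiveRoot_exp m (by omega) using 2
    push_cast
    ring
  have hζ_pow (j : ℕ) : ζ ^ j = Complex.exp ((2 * π * j / m : ℝ) * Complex.I) := by
    rw [← Complex.exp_nat_mul]
    congr 1
    push_cast
    ring
  have him : (∑ j ∈ range m, (j : ℂ) * ζ ^ j).im =
      ∑ j ∈ range m, (j : ℝ) * Real.sin (2 * π * j / m) := by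
    rw [Complex.im_sum]
    refine sum_congr rfl fun j _ => ?_
    rw [hζ_pow, ← Complex.ofReal_natCast, Complex.im_ofReal_mul, Complex.exp_ofReal_mul_I_im]
  have hm0 : (m : ℝ) ≠ 0 := by positivity
  calc ∑ j : Fin m, (j : ℝ) / m * Real.sin (2 * π * j / m)
      = (∑ j ∈ range m, (j : ℝ) * Real.sin (2 * π * j / m)) / m := by
        rw [Fin.sum_univ_eq_sum_range (fun j => (j : ℝ) / m * Real.sin (2 * π * j / m)), sum_div]
        exact sum_congr rfl fun j _ => by ring
    _ = m * (ζ - 1)⁻¹.im / m := by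
        rw [← him, hζ.sum_range_mul_pow (by omega), div_eq_mul_inv (m : ℂ),
          ← Complex.ofReal_natCast, Complex.im_ofReal_mul]
    _ = -Real.cot (π / m) / 2 := by
        rw [Complex.im_inv_exp_mul_I_sub_one, mul_div_cancel_left₀ _ hm0]
        congr 3
        ring

theorem cornerGrid_sum_prod_x_sin_general (d m : ℕ) (hm : 2 ≤ m) :
    ((m : ℝ) ^ d)⁻¹ * ∑ i : Fin d → Fin m,
        ∏ k : Fin d, ((i k : ℝ) / m * Real.sin (2 * π * (i k : ℝ) / m)) =
      (-Real.cot (π / m) / (2 * m)) ^ d := by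
  rw [← Fintype.sum_pow (fun j : Fin m => (j : ℝ) / m * Real.sin (2 * π * j / m)),
    cornerGrid_sum_x_sin m hm, ← inv_pow, ← mul_pow]
  congr 1
  field_simp

/-- The corner-grid quadrature sum of
`v(x) = ∏_k x_k·sin(2π x_k)` equals `(−cot(π/m)/(2m))^d`. -/
theorem cornerGrid_sum_prod_x_sin (d m : ℕ) (hd : 0 < d) (hm : 2 ≤ m) :
    ((m : ℝ) ^ d)⁻¹ * ∑ i : Fin d → Fin m,
        ∏ k : Fin d, ((i k : ℝ) / m * Real.sin (2 * π * (i k : ℝ) / m)) =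
      (-Real.cot (π / m) / (2 * m)) ^ d :=
  cornerGrid_sum_prod_x_sin_general d m hm
end

section
/- Let d be a positive integer and m ≥ 2 an integer, and set n = m^d. Then the discretization error of the corner-grid quadrature rule for the function v(x) = ∏_{k=1}^{d} x_k·sin(2π x_k) on [0,1]^d is bounded below as follows: | ∫_{[0,1]^d} ∏_{k=1}^{d} ( x_k·sin(2π x_k) ) dx − m^{-d} · Σ_{i ∈ {0,...,m−1}^d} ∏_{k=1}^{d} ( (i_k/m)·sin(2π i_k/m) ) | ≥ (2π)^{-d} · ( 1 − (1 − π²/(3m²))^d ). In particular, the discretization error of this function decays no faster than order m^{-2} = n^{-2/d} for fixed d. -/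
/-!
Both the integral and the corner-grid sum factor over the coordinates. In one dimension the
integral of `x sin (2πx)` is `-1/(2π)`, while with `θ = π/m` the corner rule gives
`-θ cot θ / (2π)`: up to the factor `m⁻²` this is the imaginary part of
`∑ k zᵏ = m / (z - 1)` at the root of unity `z = e^{2iθ}`. The error is therefore
`(2π)⁻ᵈ |1 - (θ cot θ)ᵈ|`, and `0 ≤ θ cot θ ≤ 1 - θ²/3` because `(1 - t²/3) sin t - t cos t`
is increasing on `[0, π]`.
-/

open MeasureTheory Real Finset

theorem setIntegral_univ_pi_prod {ι 𝕜 : Type*} [RCLike 𝕜] [Fintype ι] {E : ι → Type*}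
    [∀ i, MeasureSpace (E i)] [∀ i, SigmaFinite (volume : Measure (E i))]
    (s : ∀ i, Set (E i)) (f : ∀ i, E i → 𝕜) :
    ∫ x in Set.univ.pi s, ∏ i, f i (x i) = ∏ i, ∫ t in s i, f i t := by
  rw [volume_pi, Measure.restrict_pi_pi, integral_fintype_prod_eq_prod]

theorem integral_mul_sin_two_pi_mul :
    ∫ x in (0:ℝ)..1, x * sin (2 * π * x) = -(2 * π)⁻¹ := by
  have hderiv : ∀ x : ℝ, HasDerivAt
      (fun y ↦ sin (2 * π * y) / (2 * π) ^ 2 - y * cos (2 * π * y) / (2 * π))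
      (x * sin (2 * π * x)) x := by
    intro x
    have hlin : HasDerivAt (fun y : ℝ ↦ 2 * π * y) (2 * π) x := by
      simpa using (hasDerivAt_id x).const_mul (2 * π)
    have := (((hasDerivAt_sin _).comp x hlin).div_const ((2 * π) ^ 2)).sub
      (((hasDerivAt_id x).mul ((hasDerivAt_cos _).comp x hlin)).div_const (2 * π))
    refine this.congr_deriv ?_
    simp only [Function.comp_apply, id]
    field_simp
    ring
  rw [intervalIntegral.integral_eq_sub_of_hasDerivAt (fun x _ ↦ hderiv x)
    (by apply Continuous.intervalIntegrable; fun_prop)]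
  simp [cos_two_pi, sin_two_pi]

theorem sum_range_natCast_mul_pow_of_pow_eq_one {K : Type*} [Field K] {z : K} {m : ℕ}
    (hzm : z ^ m = 1) (hz : z ≠ 1) :
    ∑ k ∈ range m, (k : K) * z ^ k = m / (z - 1) := by
  have telescope : ∀ M : ℕ, (z - 1) * ∑ k ∈ range M, (k : K) * z ^ k
      = M * z ^ M - ∑ k ∈ range M, z ^ k - z ^ M + 1 := by
    intro M
    induction M with
    | zero => simp
    | succ M ih =>
      rw [sum_range_succ, sum_range_succ (fun k ↦ z ^ k), mul_add, ih]
      push_cast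
      ring
  have hz' : z - 1 ≠ 0 := sub_ne_zero.2 hz
  rw [eq_div_iff hz', mul_comm, telescope, hzm, geom_sum_eq hz m, hzm]
  simp

theorem im_div_exp_mul_I_sub_one (a θ : ℝ) (hθ : sin θ ≠ 0) :
    ((a : ℂ) / (Complex.exp ((2 * θ : ℝ) * Complex.I) - 1)).im = -(a / 2) * cot θ := by
  have hnormSq :
      Complex.normSq (Complex.exp ((2 * θ : ℝ) * Complex.I) - 1) = 4 * sin θ ^ 2 := by
    rw [Complex.normSq_apply]
    simp only [Complex.sub_re, Complex.sub_im, Complex.exp_ofReal_mul_I_re,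
      Complex.exp_ofReal_mul_I_im, Complex.one_re, Complex.one_im, cos_two_mul, sin_two_mul]
    nlinarith [sin_sq_add_cos_sq θ]
  rw [Complex.div_im, hnormSq]
  simp only [Complex.sub_re, Complex.sub_im, Complex.exp_ofReal_mul_I_re,
    Complex.exp_ofReal_mul_I_im, Complex.one_re, Complex.one_im, Complex.ofReal_re,
    Complex.ofReal_im, sin_two_mul, cot_eq_cos_div_sin]
  field_simp
  ring

theorem sum_range_natCast_mul_sin_two_pi_mul_div {m : ℕ} (hm : 2 ≤ m) :
    ∑ k ∈ range m, (k : ℝ) * sin (2 * π * k / m) = -(m / 2) * cot (π / m) := by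
  have hm2 : (2 : ℝ) ≤ m := by exact_mod_cast hm
  have hsin : sin (π / m) ≠ 0 := by
    refine (sin_pos_of_pos_of_lt_pi (by positivity) ?_).ne'
    rw [div_lt_iff₀ (by positivity)]
    nlinarith [pi_pos]
  have hζ : IsPrimitiveRoot (Complex.exp ((2 * (π / m) : ℝ) * Complex.I)) m := by
    convert Complex.isPrimitiveRoot_exp m (by omega) using 2
    push_cast
    ring
  have key := congrArg Complex.im (sum_range_natCast_mul_pow_of_pow_eq_one hζ.pow_eq_one
    (hζ.ne_one (by omega)))
  rw [Complex.im_sum, ← Complex.ofReal_natCast, im_div_exp_mul_I_sub_one _ _ hsin] at key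
  rw [← key]
  refine sum_congr rfl fun k _ ↦ ?_
  rw [← Complex.exp_nat_mul, ← Complex.ofReal_natCast, ← mul_assoc, ← Complex.ofReal_mul,
    Complex.im_ofReal_mul, Complex.exp_ofReal_mul_I_im]
  ring_nf

theorem inv_mul_sum_div_mul_sin_two_pi_mul_div {m : ℕ} (hm : 2 ≤ m) :
    (m : ℝ)⁻¹ * ∑ j : Fin m, (j : ℝ) / m * sin (2 * π * j / m)
      = -(2 * π)⁻¹ * (π / m * cot (π / m)) := by
  have hm0 : (m : ℝ) ≠ 0 := by positivity
  calc (m : ℝ)⁻¹ * ∑ j : Fin m, (j : ℝ) / m * sin (2 * π * j / m)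
      = ((m : ℝ) ^ 2)⁻¹ * ∑ k ∈ range m, (k : ℝ) * sin (2 * π * k / m) := by
        rw [Fin.sum_univ_eq_sum_range (fun j ↦ (j : ℝ) / m * sin (2 * π * j / m)), mul_sum,
          mul_sum]
        refine sum_congr rfl fun k _ ↦ ?_
        field_simp
    _ = -(2 * π)⁻¹ * (π / m * cot (π / m)) := by
        rw [sum_range_natCast_mul_sin_two_pi_mul_div hm]
        field_simp

theorem mul_cos_le_sin {x : ℝ} (h0 : 0 ≤ x) (hπ : x ≤ π) : x * cos x ≤ sin x := by
  rcases lt_or_ge x (π / 2) with hx | hx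
  · have hcos : 0 < cos x := cos_pos_of_mem_Ioo ⟨by linarith, hx⟩
    simpa only [tan_eq_sin_div_cos, le_div_iff₀ hcos] using le_tan h0 hx
  · have : cos x ≤ 0 := cos_nonpos_of_pi_div_two_le_of_le hx (by linarith)
    nlinarith [sin_nonneg_of_nonneg_of_le_pi h0 hπ]

theorem mul_cos_le_one_sub_sq_div_three_mul_sin {x : ℝ} (h0 : 0 ≤ x) (hπ : x ≤ π) :
    x * cos x ≤ (1 - x ^ 2 / 3) * sin x := by
  set g : ℝ → ℝ := fun t ↦ (1 - t ^ 2 / 3) * sin t - t * cos t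
  have hderiv : ∀ t, HasDerivAt g (t / 3 * (sin t - t * cos t)) t := by
    intro t
    have hquad : HasDerivAt (fun t : ℝ ↦ 1 - t ^ 2 / 3) (-(2 * t / 3)) t := by
      simpa using ((hasDerivAt_pow 2 t).div_const 3).const_sub 1
    refine ((hquad.mul (hasDerivAt_sin t)).sub
      ((hasDerivAt_id t).mul (hasDerivAt_cos t))).congr_deriv ?_
    simp only [id]
    ring
  have hmono : MonotoneOn g (Set.Icc 0 π) := by
    refine monotoneOn_of_deriv_nonneg (convex_Icc 0 π) (by fun_prop)
      (fun t _ ↦ (hderiv t).differentiableAt.differentiableWithinAt) fun t ht ↦ ?_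
    rw [interior_Icc] at ht
    rw [(hderiv t).deriv]
    exact mul_nonneg (by linarith [ht.1]) (sub_nonneg.2 (mul_cos_le_sin ht.1.le ht.2.le))
  simpa [g] using hmono ⟨le_rfl, pi_pos.le⟩ ⟨h0, hπ⟩ h0

theorem mul_cot_le_one_sub_sq_div_three {x : ℝ} (h0 : 0 < x) (hπ : x < π) :
    x * cot x ≤ 1 - x ^ 2 / 3 := by
  rw [cot_eq_cos_div_sin, ← mul_div_assoc, div_le_iff₀ (sin_pos_of_pos_of_lt_pi h0 hπ)]
  exact mul_cos_le_one_sub_sq_div_three_mul_sin h0.le hπ.le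

theorem mul_cot_nonneg {x : ℝ} (h0 : 0 ≤ x) (hπ : x ≤ π / 2) : 0 ≤ x * cot x := by
  rw [cot_eq_cos_div_sin]
  exact mul_nonneg h0 (div_nonneg (cos_nonneg_of_mem_Icc ⟨by linarith [pi_pos], hπ⟩)
    (sin_nonneg_of_nonneg_of_le_pi h0 (by linarith [pi_pos])))

theorem pow_abs_mul_one_sub_pow_le_abs_pow_sub_mul_pow {a y c : ℝ} (hy : 0 ≤ y) (hyc : y ≤ c)
    (d : ℕ) : |a| ^ d * (1 - c ^ d) ≤ |a ^ d - (a * y) ^ d| := by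
  rw [mul_pow, ← mul_one_sub, abs_mul, abs_pow]
  gcongr
  exact (sub_le_sub_left (pow_le_pow_left₀ hy hyc d) 1).trans (le_abs_self _)

theorem cornerGrid_discretization_error_lower_bound_general
    (d m : ℕ) (hm : 2 ≤ m) :
    |(∫ x in Set.univ.pi fun _ : Fin d => Set.Icc (0:ℝ) 1,
        ∏ k : Fin d, (x k * Real.sin (2 * π * x k))) -
      ((m : ℝ) ^ d)⁻¹ * ∑ i : Fin d → Fin m,
        ∏ k : Fin d, ((i k : ℝ) / m * Real.sin (2 * π * (i k : ℝ) / m))| ≥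
    ((2 * π) ^ d)⁻¹ * (1 - (1 - π ^ 2 / (3 * m ^ 2)) ^ d) := by
  have hm2 : (2 : ℝ) ≤ m := by exact_mod_cast hm
  have hθ0 : 0 < π / m := by positivity
  have hθ : π / m ≤ π / 2 := div_le_div_of_nonneg_left pi_pos.le two_pos hm2
  have hintegral : (∫ x in Set.univ.pi fun _ : Fin d => Set.Icc (0:ℝ) 1,
      ∏ k : Fin d, (x k * sin (2 * π * x k))) = (-(2 * π)⁻¹) ^ d := by
    rw [setIntegral_univ_pi_prod (fun _ ↦ Set.Icc 0 1) (fun _ t ↦ t * sin (2 * π * t)),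
      prod_const, card_univ, Fintype.card_fin,
      integral_Icc_eq_integral_Ioc, ← intervalIntegral.integral_of_le zero_le_one,
      integral_mul_sin_two_pi_mul]
  have hquadrature : ((m : ℝ) ^ d)⁻¹ * ∑ i : Fin d → Fin m,
      ∏ k : Fin d, ((i k : ℝ) / m * sin (2 * π * (i k : ℝ) / m))
      = (-(2 * π)⁻¹ * (π / m * cot (π / m))) ^ d := by
    rw [← inv_mul_sum_div_mul_sin_two_pi_mul_div hm, mul_pow, inv_pow, Fintype.sum_pow]
  have hsq : 1 - π ^ 2 / (3 * m ^ 2) = 1 - (π / m) ^ 2 / 3 := by ring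
  rw [hintegral, hquadrature, hsq, ge_iff_le]
  convert pow_abs_mul_one_sub_pow_le_abs_pow_sub_mul_pow (mul_cot_nonneg hθ0.le hθ)
    (mul_cot_le_one_sub_sq_div_three hθ0 (by linarith [pi_pos])) d using 2
  rw [abs_neg, abs_inv, abs_of_pos two_pi_pos, inv_pow]

/-- Lower bound on the corner-grid discretization error of
`v(x) = ∏_k x_k·sin(2π x_k)` on `[0,1]^d`. -/
theorem cornerGrid_discretization_error_lower_bound
    (d m : ℕ) (hd : 0 < d) (hm : 2 ≤ m) (n : ℕ) (hn : n = m ^ d) :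
    |(∫ x in Set.univ.pi fun _ : Fin d => Set.Icc (0:ℝ) 1,
        ∏ k : Fin d, (x k * Real.sin (2 * π * x k))) -
      ((m : ℝ) ^ d)⁻¹ * ∑ i : Fin d → Fin m,
        ∏ k : Fin d, ((i k : ℝ) / m * Real.sin (2 * π * (i k : ℝ) / m))| ≥
    ((2 * π) ^ d)⁻¹ * (1 - (1 - π ^ 2 / (3 * m ^ 2)) ^ d) :=
  cornerGrid_discretization_error_lower_bound_general d m hm
end

section
/- Let d, m be positive integers, ω ∈ ℝ^d, ε > 0, and M > 0. Let v : [0,1]^d → ℝ satisfy |v(x)| ≤ M for all x ∈ [0,1]^d, and let q : ℝ → ℝ be a rounding map with relative error ε, i.e., |q(x) − x| ≤ ε·|x| for all x ∈ ℝ; extend q to ℂ by applying it separately to real and imaginary parts, q̃(z) = q(Re z) + i·q(Im z). Then the precision error of the corner-grid sum for the complex Fourier integrand satisfies | m^{-d} · Σ_{i ∈ {0,...,m−1}^d} v(i/m)·e^{2πi⟨ω, i/m⟩} − m^{-d} · Σ_{i ∈ {0,...,m−1}^d} q(v(i/m))·q̃(e^{2πi⟨ω, i/m⟩}) | ≤ 2·(2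 + ε)·ε·M. In particular there is a constant c > 0 with precision error at most c·ε·M, so for fixed ε the precision error does not grow with the mesh size n = m^d. -/
/-!
Each term of the corner-grid sum carries an error of at most `2 (2 + ε) ε M`, independently of
the grid: writing `a = v(i/m)` and `z = e^{2πi⟨ω, i/m⟩}`, split
`a z - q(a) q̃(z) = (a - q(a)) z + q(a) (z - q̃(z))`, where `|a - q(a)| ≤ ε M`, `|q(a)| ≤ (1 + ε) M`,
and `|z - q̃(z)| ≤ ε (|Re z| + |Im z|) ≤ 2 ε` because `|z| = 1`. The quadrature weights `m^{-d}`
sum to one, so the averaged error obeys the same bound.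
-/

open Real Finset

noncomputable def complexRound (q : ℝ → ℝ) (z : ℂ) : ℂ :=
  q z.re + q z.im * Complex.I

section RelativeError

variable {ε : ℝ} {q : ℝ → ℝ}

theorem nonneg_of_relError (hq : ∀ x, |q x - x| ≤ ε * |x|) : 0 ≤ ε := by
  simpa using (abs_nonneg _).trans (hq 1)

theorem abs_le_one_add_mul_abs_of_relError (hq : ∀ x, |q x - x| ≤ ε * |x|) (x : ℝ) :
    |q x| ≤ (1 + ε) * |x| := by
  have := abs_sub_abs_le_abs_sub (q x) x
  linarith [hq x]

theorem norm_sub_complexRound_le (hq : ∀ x, |q x - x| ≤ ε * |x|) (z : ℂ) :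
    ‖z - complexRound q z‖ ≤ 2 * ε * ‖z‖ := by
  have hε := nonneg_of_relError hq
  calc ‖z - complexRound q z‖ ≤ |z.re - q z.re| + |z.im - q z.im| := by
        simpa [complexRound] using Complex.norm_le_abs_re_add_abs_im (z - complexRound q z)
    _ ≤ ε * |z.re| + ε * |z.im| := by
        rw [abs_sub_comm z.re, abs_sub_comm z.im]
        exact add_le_add (hq _) (hq _)
    _ ≤ ε * ‖z‖ + ε * ‖z‖ := by
        gcongr
        exacts [Complex.abs_re_le_norm z, Complex.abs_im_le_norm z]
    _ = 2 * ε * ‖z‖ := by ring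

theorem norm_mul_sub_round_mul_complexRound_le (hq : ∀ x, |q x - x| ≤ ε * |x|) (a : ℝ) (z : ℂ) :
    ‖a * z - q a * complexRound q z‖ ≤ 2 * (2 + ε) * ε * (|a| * ‖z‖) := by
  have hε := nonneg_of_relError hq
  have hsplit : (a : ℂ) * z - q a * complexRound q z
      = ((a - q a : ℝ) : ℂ) * z + q a * (z - complexRound q z) := by push_cast; ring
  have hround := norm_sub_complexRound_le hq z
  have hqa := abs_le_one_add_mul_abs_of_relError hq a
  calc ‖(a : ℂ) * z - q a * complexRound q z‖
      ≤ |q a - a| * ‖z‖ + |q a| * ‖z - complexRound q z‖ := by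
        rw [hsplit]
        refine (norm_add_le _ _).trans ?_
        rw [norm_mul, norm_mul, Complex.norm_real, Complex.norm_real, Real.norm_eq_abs,
          Real.norm_eq_abs, abs_sub_comm]
    _ ≤ ε * |a| * ‖z‖ + (1 + ε) * |a| * (2 * ε * ‖z‖) := by
        gcongr
        exact hq a
    _ ≤ 2 * (2 + ε) * ε * (|a| * ‖z‖) := by
        have : 0 ≤ ε * (|a| * ‖z‖) := by positivity
        nlinarith

end RelativeError

theorem norm_inv_card_mul_sum_le {ι : Type*} [Fintype ι] (f : ι → ℂ) {C : ℝ} (hC : 0 ≤ C)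
    (hf : ∀ i, ‖f i‖ ≤ C) : ‖(((Fintype.card ι : ℝ)⁻¹ : ℝ) : ℂ) * ∑ i, f i‖ ≤ C := by
  rw [norm_mul, Complex.norm_real, norm_inv, Real.norm_natCast]
  rcases (Fintype.card ι).eq_zero_or_pos with h | h
  · simpa [h] using hC
  calc (Fintype.card ι : ℝ)⁻¹ * ‖∑ i, f i‖ ≤ (Fintype.card ι : ℝ)⁻¹ * (Fintype.card ι * C) := by
        gcongr
        simpa using norm_sum_le_of_le univ fun i _ => hf i
    _ = C := by field_simp

theorem norm_exp_two_pi_I_mul_ofReal (θ : ℝ) :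
    ‖Complex.exp (2 * Real.pi * Complex.I * (θ : ℂ))‖ = 1 := by
  simpa [mul_comm, mul_left_comm, mul_assoc] using Complex.norm_exp_ofReal_mul_I (2 * π * θ)

theorem cornerGrid_precision_error_complex_general
    (d m : ℕ)
    (ω : Fin d → ℝ) (ε M : ℝ) (hM : 0 < M)
    (v : (Fin d → ℝ) → ℝ)
    (hBound : ∀ x ∈ Set.univ.pi fun _ : Fin d => Set.Icc (0:ℝ) 1, |v x| ≤ M)
    (q : ℝ → ℝ) (hq : ∀ x : ℝ, |q x - x| ≤ ε * |x|) :
    Norm.norm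
      (((m : ℝ) ^ d)⁻¹ * (∑ i : Fin d → Fin m,
          (v (fun k => (i k : ℝ) / m) : ℂ) *
            Complex.exp (2 * Real.pi * Complex.I *
              ((∑ k, ω k * ((i k : ℝ) / m) : ℝ) : ℂ))) -
        ((m : ℝ) ^ d)⁻¹ * (∑ i : Fin d → Fin m,
          (q (v (fun k => (i k : ℝ) / m)) : ℂ) *
            ((q ((Complex.exp (2 * Real.pi * Complex.I *
                ((∑ k, ω k * ((i k : ℝ) / m) : ℝ) : ℂ))).re) : ℂ) +
              (q ((Complex.exp (2 * Real.pi * Complex.I *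
                ((∑ k, ω k * ((i k : ℝ) / m) : ℝ) : ℂ))).im) : ℂ) * Complex.I))) ≤
    2 * (2 + ε) * ε * M := by
  have hgrid (i : Fin d → Fin m) :
      (fun k => (i k : ℝ) / m) ∈ Set.univ.pi fun _ : Fin d => Set.Icc (0:ℝ) 1 :=
    fun k _ => ⟨by positivity, div_le_one_of_le₀ (mod_cast (i k).is_lt.le) m.cast_nonneg⟩
  have hcard : (Fintype.card (Fin d → Fin m) : ℝ) = (m : ℝ) ^ d := by simp
  have hε := nonneg_of_relError hq
  rw [← mul_sub, ← sum_sub_distrib, ← hcard]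
  refine norm_inv_card_mul_sum_le _ (by positivity) fun i => ?_
  have := norm_mul_sub_round_mul_complexRound_le hq (v fun k => (i k : ℝ) / m)
    (Complex.exp (2 * Real.pi * Complex.I * ((∑ k, ω k * ((i k : ℝ) / m) : ℝ) : ℂ)))
  rw [norm_exp_two_pi_I_mul_ofReal, mul_one] at this
  exact this.trans (by gcongr; exact hBound _ (hgrid i))

/-- Precision error of the corner-grid sum for the complex
Fourier integrand under a rounding map with relative error `ε`, applied to the
real and imaginary parts separately. -/
theorem cornerGrid_precision_error_complex
    (d m : ℕ) (hd : 0 < d) (hm : 0 < m)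
    (ω : Fin d → ℝ) (ε M : ℝ) (hε : 0 < ε) (hM : 0 < M)
    (v : (Fin d → ℝ) → ℝ)
    (hBound : ∀ x ∈ Set.univ.pi fun _ : Fin d => Set.Icc (0:ℝ) 1, |v x| ≤ M)
    (q : ℝ → ℝ) (hq : ∀ x : ℝ, |q x - x| ≤ ε * |x|) :
    Norm.norm
      (((m : ℝ) ^ d)⁻¹ * (∑ i : Fin d → Fin m,
          (v (fun k => (i k : ℝ) / m) : ℂ) *
            Complex.exp (2 * Real.pi * Complex.I *
              ((∑ k, ω k * ((i k : ℝ) / m) : ℝ) : ℂ))) -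
        ((m : ℝ) ^ d)⁻¹ * (∑ i : Fin d → Fin m,
          (q (v (fun k => (i k : ℝ) / m)) : ℂ) *
            ((q ((Complex.exp (2 * Real.pi * Complex.I *
                ((∑ k, ω k * ((i k : ℝ) / m) : ℝ) : ℂ))).re) : ℂ) +
              (q ((Complex.exp (2 * Real.pi * Complex.I *
                ((∑ k, ω k * ((i k : ℝ) / m) : ℝ) : ℂ))).im) : ℂ) * Complex.I))) ≤
    2 * (2 + ε) * ε * M :=
  cornerGrid_precision_error_complex_general d m ω ε M hM v hBound q hq
end
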